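/- Let p ≥ 5 be a prime and let n be an odd positive integer. There is no finite connected pentavalent graph Γ with exactly 4n vertices admitting an arc-transitive group of automorphisms G ≤ Aut Γ with G isomorphic to SL(2,p). -/

import Mathlib

/-- The automorphism group of a simple graph acts on its vertices. -/
instance graphAutMulAction {V : Type*} {Γ : SimpleGraph V} : MulAction (Γ ≃g Γ) V where
  smul g v := g v
  one_smul _ := rfl
  mul_smul _ _ _ := rfl

/-!
`SL(2,p)` has order `p(p² - 1)`, which is divisible by `8`, while `4n` is not; since `G` is
transitive on vertices, the vertex stabiliser therefore has even order and contains an involution.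
The only involution of `SL(2,p)` is `-1`, which is central, and a central element fixing one point
of a transitive action fixes every point. So it acts trivially, contradicting faithfulness.
-/

open Matrix MulAction
open scoped MatrixGroups

namespace Matrix.SpecialLinearGroup

theorem ker_det_eq_range_toGL {n R : Type*} [Fintype n] [DecidableEq n] [CommRing R] :
    (GeneralLinearGroup.det : GL n R →* Rˣ).ker =
      (toGL : SpecialLinearGroup n R →* GL n R).range := by
  ext A
  constructor
  · intro hA
    refine ⟨⟨A, by simpa [Units.ext_iff] using hA⟩, Units.ext rfl⟩
  · rintro ⟨B, rfl⟩
    simp [MonoidHom.mem_ker]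

theorem card_mul_card_units {n R : Type*} [Fintype n] [DecidableEq n] [Nonempty n] [CommRing R] :
    Nat.card (SpecialLinearGroup n R) * Nat.card Rˣ = Nat.card (GL n R) := by
  rw [← (GeneralLinearGroup.det : GL n R →* Rˣ).ker.card_mul_index, Subgroup.index_ker,
    MonoidHom.range_eq_top_of_surjective _ GeneralLinearGroup.det_surjective, Subgroup.card_top,
    ker_det_eq_range_toGL, Nat.card_congr (MonoidHom.ofInjective toGL_injective).toEquiv]

theorem card_SL2 {K : Type*} [Field K] [Fintype K] :
    Nat.card SL(2, K) = Fintype.card K * (Fintype.card K ^ 2 - 1) := by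
  have h := card_mul_card_units (n := Fin 2) (R := K)
  rw [card_GL_field, Fin.prod_univ_two, Nat.card_units, Nat.card_eq_fintype_card (α := K)] at h
  simp only [Fin.val_zero, Fin.val_one, pow_zero, pow_one] at h
  set q := Fintype.card K
  have hq : 0 < q - 1 := Nat.sub_pos_of_lt Fintype.one_lt_card
  have hsq : q ^ 2 - q = q * (q - 1) := by rw [Nat.mul_sub_one, sq]
  refine Nat.eq_of_mul_eq_mul_right hq ?_
  rw [h, hsq]
  ring

theorem eight_dvd_card_SL2 {K : Type*} [Field K] [Fintype K] (hK : ringChar K ≠ 2) :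
    8 ∣ Nat.card SL(2, K) := by
  rw [card_SL2]
  exact (Nat.eight_dvd_sq_sub_one_of_odd
    (Nat.odd_iff.mpr (FiniteField.odd_card_of_char_ne_two hK))).mul_left _

theorem SL2_eq_one_or_eq_neg_one_of_sq_eq_one {K : Type*} [CommRing K] [IsDomain K]
    (hK : ringChar K ≠ 2) {A : SL(2, K)} (hA : A ^ 2 = 1) : A = 1 ∨ A = -1 := by
  have h2 : (2 : K) ≠ 0 := Ring.two_ne_zero hK
  have hinv : A⁻¹ = A := inv_eq_of_mul_eq_one_right (by rw [← sq, hA])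
  rw [SL2_inv_expl] at hinv
  have entry (i j : Fin 2) := congrArg (fun B : SL(2, K) ↦ B i j) hinv
  have hb : A 0 1 = 0 := by simpa [neg_eq_iff_add_eq_zero, ← two_mul, h2] using entry 0 1
  have hc : A 1 0 = 0 := by simpa [neg_eq_iff_add_eq_zero, ← two_mul, h2] using entry 1 0
  have hd : A 1 1 = A 0 0 := by simpa using entry 0 0
  have hdet : A 0 0 * A 0 0 = 1 := by
    have := A.det_coe
    rwa [det_fin_two, hb, hd, zero_mul, sub_zero] at this
  rcases mul_self_eq_one_iff.mp hdet with ha | ha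
  · left; ext i j; fin_cases i <;> fin_cases j <;> simp [ha, hb, hc, hd]
  · right; ext i j; fin_cases i <;> fin_cases j <;> simp [ha, hb, hc, hd]

theorem SL2_mem_center_of_sq_eq_one {K : Type*} [CommRing K] [IsDomain K]
    (hK : ringChar K ≠ 2) {A : SL(2, K)} (hA : A ^ 2 = 1) : A ∈ Subgroup.center SL(2, K) := by
  rw [Subgroup.mem_center_iff]
  rcases SL2_eq_one_or_eq_neg_one_of_sq_eq_one hK hA with rfl | rfl <;> simp

end Matrix.SpecialLinearGroup

namespace MulAction

theorem eq_one_of_mem_center_of_smul_eq {G α : Type*} [Group G] [MulAction G α]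
    [FaithfulSMul G α] [IsPretransitive G α] {g : G} (hg : g ∈ Subgroup.center G) {a : α}
    (ha : g • a = a) : g = 1 := by
  refine eq_of_smul_eq_smul (α := α) fun b ↦ ?_
  obtain ⟨h, rfl⟩ := exists_smul_eq G a b
  rw [smul_smul, ← (Subgroup.mem_center_iff.mp hg h), mul_smul, ha, one_smul]

theorem card_mul_card_stabilizer {G α : Type*} [Group G] [MulAction G α] [IsPretransitive G α]
    (a : α) : Nat.card α * Nat.card (stabilizer G a) = Nat.card G := by
  rw [← index_stabilizer_of_transitive G a, mul_comm, Subgroup.card_mul_index]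

theorem prime_dvd_card_stabilizer {G α : Type*} [Group G] [MulAction G α] [IsPretransitive G α]
    {p k m : ℕ} (hp : p.Prime) (hG : p ^ (k + 1) ∣ Nat.card G) (hα : Nat.card α = p ^ k * m)
    (hm : ¬ p ∣ m) (a : α) : p ∣ Nat.card (stabilizer G a) := by
  rw [← card_mul_card_stabilizer a, hα, mul_assoc, pow_succ] at hG
  exact (hp.dvd_mul.mp (Nat.dvd_of_mul_dvd_mul_left (pow_pos hp.pos k) hG)).resolve_left hm

end MulAction

instance graphAutFaithfulSMul {V : Type*} {Γ : SimpleGraph V} : FaithfulSMul (Γ ≃g Γ) V :=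
  ⟨fun h ↦ RelIso.ext h⟩

theorem SimpleGraph.isPretransitive_of_arcTransitive {V : Type*} {Γ : SimpleGraph V}
    (G : Subgroup (Γ ≃g Γ)) (hadj : ∀ v, ∃ w, Γ.Adj v w)
    (harc : ∀ ⦃u v u' v' : V⦄, Γ.Adj u v → Γ.Adj u' v' →
      ∃ g ∈ G, g • u = u' ∧ g • v = v') :
    IsPretransitive G V := by
  refine ⟨fun u u' ↦ ?_⟩
  obtain ⟨v, huv⟩ := hadj u
  obtain ⟨v', hu'v'⟩ := hadj u'
  obtain ⟨g, hg, hgu, -⟩ := harc huv hu'v'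
  exact ⟨⟨g, hg⟩, hgu⟩

theorem no_SL2_arc_transitive_on_four_n_general
    {V : Type*} [Fintype V] (Γ : SimpleGraph V) [DecidableRel Γ.Adj]
    (p : ℕ) [Fact p.Prime] (hp : 5 ≤ p)
    (n : ℕ) (hodd : Odd n)
    (hcard : Fintype.card V = 4 * n)
    (hdeg : ∀ v : V, Γ.degree v = 5)
    (G : Subgroup (Γ ≃g Γ))
    (harc : ∀ ⦃u v u' v' : V⦄, Γ.Adj u v → Γ.Adj u' v' →
      ∃ g ∈ G, g • u = u' ∧ g • v = v')
    (hiso : Nonempty (G ≃* Matrix.SpecialLinearGroup (Fin 2) (ZMod p))) :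
    False := by
  obtain ⟨e⟩ := hiso
  have : Finite G := Finite.of_equiv _ e.symm.toEquiv
  have : IsPretransitive G V := SimpleGraph.isPretransitive_of_arcTransitive G
    (fun v ↦ (Γ.degree_pos_iff_exists_adj v).mp (by rw [hdeg v]; norm_num)) harc
  obtain ⟨v⟩ : Nonempty V :=
    Fintype.card_pos_iff.mp (hcard ▸ Nat.mul_pos four_pos hodd.pos)
  have hchar : ringChar (ZMod p) ≠ 2 := by rw [ZMod.ringChar_zmod_n]; omega
  have h8 : 2 ^ (2 + 1) ∣ Nat.card G :=
    Nat.card_congr e.toEquiv ▸ SpecialLinearGroup.eight_dvd_card_SL2 hchar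
  have h2 : 2 ∣ Nat.card (stabilizer G v) :=
    prime_dvd_card_stabilizer Nat.prime_two h8 (by rw [Nat.card_eq_fintype_card, hcard]; rfl)
      hodd.not_two_dvd_nat v
  obtain ⟨z, hz⟩ := exists_prime_orderOf_dvd_card' 2 h2
  have hsq : (z : G) ^ 2 = 1 := by rw [← hz, ← Subgroup.orderOf_coe, pow_orderOf_eq_one]
  have hcenter : (z : G) ∈ Subgroup.center G := (MulEquivClass.apply_mem_center_iff e).mp
    (SpecialLinearGroup.SL2_mem_center_of_sq_eq_one hchar (by rw [← map_pow, hsq, map_one]))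
  have h1 : (z : G) = 1 := eq_one_of_mem_center_of_smul_eq hcenter z.2
  rw [← Subgroup.orderOf_coe, h1, orderOf_one] at hz
  exact absurd hz (by decide)

/-- No connected pentavalent graph on `4n` vertices (`n` odd) admits an arc-transitive
group of automorphisms isomorphic to `SL(2,p)`, `p ≥ 5` prime. -/
theorem no_SL2_arc_transitive_on_four_n
    {V : Type*} [Fintype V] (Γ : SimpleGraph V) [DecidableRel Γ.Adj]
    (p : ℕ) [Fact p.Prime] (hp : 5 ≤ p)
    (n : ℕ) (hn : 0 < n) (hodd : Odd n)
    (hcard : Fintype.card V = 4 * n)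
    (hconn : Γ.Connected) (hdeg : ∀ v : V, Γ.degree v = 5)
    (G : Subgroup (Γ ≃g Γ))
    (harc : ∀ ⦃u v u' v' : V⦄, Γ.Adj u v → Γ.Adj u' v' →
      ∃ g ∈ G, g • u = u' ∧ g • v = v')
    (hiso : Nonempty (G ≃* Matrix.SpecialLinearGroup (Fin 2) (ZMod p))) :
    False :=
  no_SL2_arc_transitive_on_four_n_general Γ p hp n hodd hcard hdeg G harc hiso
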